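/- arXiv:1907.02835 — 4 statements merged into one kernel-verified Lean document; each statement's English description precedes it below -/
import Mathlib

section
/- Let λ ∈ ℝ with λ ≠ 0, and let ε ∈ ℝ satisfy 2ε²λ ≤ 1. Then for every a ∈ ℝ one has |−εa² + ia + ελ| ≥ |ε| |λ|, where the left-hand side is the modulus of the complex number −εa² + ia + ελ. Equivalently, the multiplier l_ε(a) = −εa² + ia + ελ satisfies inf_{a∈ℝ} |l_ε(a)| ≥ |ελ| for real ε with 2ε²λ ≤ 1. -/
/-- For real `ε` with `2ε²λ ≤ 1` and `λ ≠ 0`, the multiplier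
`l_ε(a) = -εa² + ia + ελ` satisfies `|l_ε(a)| ≥ |ε||λ|` for every real `a`. -/
theorem stmt10 (lam : ℝ) (hlam : lam ≠ 0) (ε : ℝ) (hε : 2 * ε ^ 2 * lam ≤ 1) (a : ℝ) :
    |ε| * |lam| ≤
      ‖(-(ε : ℂ) * (a : ℂ) ^ 2 + Complex.I * (a : ℂ) + (ε : ℂ) * (lam : ℂ))‖ := by
  set z : ℂ := -(ε : ℂ) * (a : ℂ) ^ 2 + Complex.I * (a : ℂ) + (ε : ℂ) * (lam : ℂ) with hz
  have hre : z.re = -(ε * a ^ 2) + ε * lam := by simp [hz, ← Complex.ofReal_pow]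
  have him : z.im = a := by simp [hz, ← Complex.ofReal_pow]
  have hsq : ‖z‖ ^ 2 = (-(ε * a ^ 2) + ε * lam) ^ 2 + a ^ 2 := by
    rw [Complex.sq_norm, Complex.normSq_apply, hre, him]; ring
  have key : (|ε| * |lam|) ^ 2 ≤ ‖z‖ ^ 2 := by
    rw [hsq, mul_pow, sq_abs, sq_abs]
    nlinarith [sq_nonneg a, sq_nonneg (ε * a), sq_nonneg (a ^ 2), mul_nonneg (sq_nonneg a) (sq_nonneg (ε * a))]
  exact le_of_pow_le_pow_left₀ two_ne_zero (norm_nonneg z) key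
end

section
/- Let λ ∈ ℝ with λ ≠ 0 and let μ > 0. Then there exist constants C > 0 and σ₀ > 0 (depending on λ and μ) such that for every 0 < σ ≤ σ₀, every ε ∈ Ω(σ,μ) and every a ∈ ℝ one has |−εa² + ia + ελ| ≥ σ/C; equivalently sup_{a∈ℝ} |l_ε(a)|^{-1} ≤ C σ^{-1} for all ε ∈ Ω(σ,μ). -/
/-- The conical domain `Ω(σ,μ) = {ε ∈ ℂ : Re ε ≥ μ|Im ε|, σ ≤ |ε| ≤ 2σ}`. -/
def ConeDom (σ μ : ℝ) : Set ℂ :=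
  {ε : ℂ | μ * |ε.im| ≤ ε.re ∧ σ ≤ ‖ε‖ ∧ ‖ε‖ ≤ 2 * σ}

set_option maxHeartbeats 1000000 in
/-- for `λ ≠ 0` and `μ > 0` there are `C > 0` and `σ₀ > 0` such that
for all `0 < σ ≤ σ₀`, all `ε ∈ Ω(σ,μ)` and all real `a`,
`|l_ε(a)| = |-εa² + ia + ελ| ≥ σ/C`. -/
theorem stmt12 (lam : ℝ) (hlam : lam ≠ 0) (μ : ℝ) (hμ : 0 < μ) :
    ∃ C > (0 : ℝ), ∃ σ₀ > (0 : ℝ), ∀ σ : ℝ, 0 < σ → σ ≤ σ₀ → ∀ ε ∈ ConeDom σ μ, ∀ a : ℝ,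
      σ / C ≤ ‖-ε * (a : ℂ) ^ 2 + Complex.I * (a : ℂ) + ε * (lam : ℂ)‖ := by
  have hlam' : 0 < |lam| := abs_pos.mpr hlam
  obtain ⟨s, hs0, hssq⟩ : ∃ s : ℝ, 0 < s ∧ s ^ 2 = |lam| / 2 :=
    ⟨Real.sqrt (|lam| / 2), Real.sqrt_pos.mpr (by positivity),
      Real.sq_sqrt (by positivity)⟩
  obtain ⟨r, hr0, hrsq⟩ : ∃ r : ℝ, 0 < r ∧ r ^ 2 = 1 + μ ^ 2 :=
    ⟨Real.sqrt (1 + μ ^ 2), Real.sqrt_pos.mpr (by positivity),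
      Real.sq_sqrt (by positivity)⟩
  obtain ⟨m, hm0, hmr⟩ : ∃ m : ℝ, 0 < m ∧ m * r = μ :=
    ⟨μ / r, by positivity, div_mul_cancel₀ μ hr0.ne'⟩
  obtain ⟨σ₀, hσ₀0, hσ₀s⟩ : ∃ σ₀ : ℝ, 0 < σ₀ ∧ σ₀ * |lam| = s / 2 :=
    ⟨s / (2 * |lam|), by positivity, by field_simp⟩
  obtain ⟨C, hC0, hC1, hC2⟩ :
      ∃ C : ℝ, 0 < C ∧ 2 / (m * |lam|) ≤ C ∧ 2 * σ₀ / s ≤ C :=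
    ⟨max (2 / (m * |lam|)) (2 * σ₀ / s),
      lt_of_lt_of_le (by positivity) (le_max_left _ _), le_max_left _ _, le_max_right _ _⟩
  refine ⟨C, hC0, σ₀, hσ₀0, ?_⟩
  intro σ hσ hσσ₀ ε hε a
  obtain ⟨h1, h2, h3⟩ := hε
  set z := -ε * (a : ℂ) ^ 2 + Complex.I * (a : ℂ) + ε * (lam : ℂ) with hz
  have hzre : z.re = ε.re * (lam - a ^ 2) := by
    simp [hz, Complex.add_re, Complex.mul_re, ← Complex.ofReal_pow]
    ring
  have hzim : z.im = ε.im * (lam - a ^ 2) + a := by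
    simp [hz, Complex.add_im, Complex.mul_im, ← Complex.ofReal_pow]
    ring
  have hre0 : 0 ≤ ε.re := le_trans (by positivity) h1
  by_cases hcase : |lam| / 2 ≤ |lam - a ^ 2|
  · -- Case 1: use the real part
    have habs : ‖ε‖ ^ 2 = ε.re ^ 2 + ε.im ^ 2 := by
      rw [Complex.sq_norm, Complex.normSq_apply]; ring
    have e1 : σ ^ 2 ≤ ε.re ^ 2 + ε.im ^ 2 := habs ▸ pow_le_pow_left₀ hσ.le h2 2
    have e2 : (μ * |ε.im|) ^ 2 ≤ ε.re ^ 2 := pow_le_pow_left₀ (by positivity) h1 2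
    have hsq : (σ * μ) ^ 2 ≤ (ε.re * r) ^ 2 := by
      nlinarith [mul_le_mul_of_nonneg_right e1 (sq_nonneg μ), e2, hrsq,
        sq_abs ε.im, sq_nonneg ε.re]
    have hkey : σ * μ ≤ ε.re * r := by
      have h0 : 0 ≤ σ * μ := by positivity
      have h1' : 0 ≤ ε.re * r := by positivity
      exact (pow_le_pow_iff_left₀ h0 h1' two_ne_zero).mp hsq
    have hre : σ * m ≤ ε.re := by
      rw [← mul_le_mul_iff_of_pos_right hr0]
      nlinarith [hmr]
    calc σ / C ≤ σ / (2 / (m * |lam|)) := by gcongr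
      _ = σ * (m * |lam|) / 2 := div_div_eq_mul_div σ 2 (m * |lam|)
      _ ≤ ε.re * |lam - a ^ 2| := by
          nlinarith [mul_le_mul hre hcase (by positivity : (0:ℝ) ≤ |lam| / 2) hre0]
      _ = |z.re| := by rw [hzre, abs_mul, abs_of_nonneg hre0]
      _ ≤ ‖z‖ := Complex.abs_re_le_norm z
  · -- Case 2: use the imaginary part
    push_neg at hcase
    have hlampos : 0 < lam := by
      rcases hlam.lt_or_gt with h | h
      · exfalso
        have hle : lam - a ^ 2 ≤ 0 := by nlinarith [sq_nonneg a]
        rw [abs_of_nonpos hle, abs_of_neg h] at hcase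
        nlinarith [sq_nonneg a]
      · exact h
    have hlamabs : |lam| = lam := abs_of_pos hlampos
    have ha2 : s ^ 2 < a ^ 2 := by
      rw [hssq, hlamabs]
      have h5 := abs_lt.mp hcase
      rw [hlamabs] at h5
      linarith [h5.1, h5.2]
    have ha : s < |a| := by
      have h6 : s ^ 2 < |a| ^ 2 := by rwa [sq_abs]
      exact lt_of_pow_lt_pow_left₀ 2 (abs_nonneg a) h6
    have him : |ε.im| ≤ 2 * σ := le_trans (Complex.abs_im_le_norm ε) h3
    have h4 : |ε.im * (lam - a ^ 2)| ≤ σ * lam := by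
      rw [abs_mul]
      calc |ε.im| * |lam - a ^ 2| ≤ (2 * σ) * (lam / 2) := by
            apply mul_le_mul him _ (abs_nonneg _) (by positivity)
            rw [hlamabs] at hcase; linarith
        _ = σ * lam := by ring
    have hσlam : σ * lam ≤ s / 2 := by
      rw [← hσ₀s, hlamabs]
      nlinarith [hlampos]
    have htri : |a| - |ε.im * (lam - a ^ 2)| ≤ |ε.im * (lam - a ^ 2) + a| := by
      have h7 := abs_sub_abs_le_abs_sub a (-(ε.im * (lam - a ^ 2)))
      rw [abs_neg, sub_neg_eq_add] at h7
      calc |a| - |ε.im * (lam - a ^ 2)| ≤ |a + ε.im * (lam - a ^ 2)| := h7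
        _ = |ε.im * (lam - a ^ 2) + a| := by rw [add_comm]
    have him2 : s / 2 ≤ |z.im| := by
      rw [hzim]
      calc s / 2 = s - s / 2 := by ring
        _ ≤ |a| - |ε.im * (lam - a ^ 2)| := by linarith
        _ ≤ |ε.im * (lam - a ^ 2) + a| := htri
    calc σ / C ≤ σ₀ / (2 * σ₀ / s) := by gcongr
      _ = s / 2 := by field_simp
      _ ≤ |z.im| := him2
      _ ≤ ‖z‖ := Complex.abs_im_le_norm z
end

section
/- Let n ≥ 1 and let J be an n×n complex matrix in Jordan normal form (block diagonal, each block having a constant diagonal entry and 1's on the subdiagonal) whose diagonal entries λ₁, …, λ_n are all real and nonzero. For ε ∈ ℂ and a ∈ ℝ set L_ε(a) = (−εa² + ia) I_n + ε J. Then for every μ > 0 there exist constants C > 0 and σ₀ > 0 (depending on n, the λ_j and μ) such that for every 0 < σ ≤ σ₀, every ε ∈ Ω(σ,μ) and every a ∈ ℝ, the matrix L_ε(a) is invertible, its inverse satisfies the operator-norm bound ‖L_ε(a)^{-1}‖ ≤ C σ^{-1}, and consequently ‖ε L_ε(a)^{-1}‖ ≤ 2C uniformly in a ∈ ℝ, ε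 ∈ Ω(σ,μ) and 0 < σ ≤ σ₀. -/
noncomputable section

/-- A matrix is in Jordan normal form: the only nonzero entries are on the diagonal or
the subdiagonal, subdiagonal entries are `0` or `1`, and a subdiagonal `1` forces the two
adjacent diagonal entries to agree (i.e. lie in the same Jordan block). -/
def IsJordanForm {n : ℕ} (J : Matrix (Fin n) (Fin n) ℂ) : Prop :=
  (∀ i j : Fin n, J i j ≠ 0 → i = j ∨ (i : ℕ) = (j : ℕ) + 1) ∧
  (∀ i j : Fin n, (i : ℕ) = (j : ℕ) + 1 → J i j = 0 ∨ (J i j = 1 ∧ J i i = J j j))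

/-- The multiplier matrix `L_ε(a) = (-εa² + ia)·I + ε·J`. -/
def Lmat {n : ℕ} (J : Matrix (Fin n) (Fin n) ℂ) (ε : ℂ) (a : ℝ) : Matrix (Fin n) (Fin n) ℂ :=
  (-ε * (a : ℂ) ^ 2 + Complex.I * (a : ℂ)) • (1 : Matrix (Fin n) (Fin n) ℂ) + ε • J

/- ### Auxiliary lemmas -/

lemma euclid_coord_le (n : ℕ) (x : EuclideanSpace ℂ (Fin n)) (j : Fin n) : ‖x j‖ ≤ ‖x‖ := by
  rw [EuclideanSpace.norm_eq]
  have h1 : ‖x j‖ ^ 2 ≤ ∑ i, ‖x i‖ ^ 2 :=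
    Finset.single_le_sum (f := fun i => ‖x i‖ ^ 2) (fun i _ => sq_nonneg _) (Finset.mem_univ j)
  calc ‖x j‖ = Real.sqrt (‖x j‖ ^ 2) := (Real.sqrt_sq (norm_nonneg _)).symm
  _ ≤ _ := Real.sqrt_le_sqrt h1

lemma euclid_norm_le_sum (n : ℕ) (x : EuclideanSpace ℂ (Fin n)) : ‖x‖ ≤ ∑ i, ‖x i‖ := by
  rw [EuclideanSpace.norm_eq]
  have h1 : ∑ i, ‖x i‖ ^ 2 ≤ (∑ i, ‖x i‖) ^ 2 :=
    Finset.sum_sq_le_sq_sum_of_nonneg (fun i _ => norm_nonneg _)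
  calc Real.sqrt (∑ i, ‖x i‖ ^ 2) ≤ Real.sqrt ((∑ i, ‖x i‖) ^ 2) := Real.sqrt_le_sqrt h1
  _ = _ := Real.sqrt_sq (Finset.sum_nonneg fun i _ => norm_nonneg _)

/-- The Euclidean operator norm is at most the sum of the entry norms. -/
lemma clm_norm_le_sum (n : ℕ) (A : Matrix (Fin n) (Fin n) ℂ) :
    ‖Matrix.toEuclideanCLM (𝕜 := ℂ) A‖ ≤ ∑ i, ∑ j, ‖A i j‖ := by
  apply ContinuousLinearMap.opNorm_le_bound _
    (Finset.sum_nonneg fun i _ => Finset.sum_nonneg fun j _ => norm_nonneg _)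
  intro x
  have hcoord : ∀ i, (Matrix.toEuclideanCLM (𝕜 := ℂ) A x) i = ∑ j, A i j * x j := fun i => rfl
  calc ‖Matrix.toEuclideanCLM (𝕜 := ℂ) A x‖
      ≤ ∑ i, ‖(Matrix.toEuclideanCLM (𝕜 := ℂ) A x) i‖ := euclid_norm_le_sum n _
  _ ≤ ∑ i, ∑ j, ‖A i j‖ * ‖x‖ := by
      refine Finset.sum_le_sum fun i _ => ?_
      rw [hcoord]
      calc ‖∑ j, A i j * x j‖ ≤ ∑ j, ‖A i j * x j‖ := norm_sum_le _ _
      _ ≤ ∑ j, ‖A i j‖ * ‖x‖ := by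
          refine Finset.sum_le_sum fun j _ => ?_
          rw [norm_mul]
          exact mul_le_mul_of_nonneg_left (euclid_coord_le n x j) (norm_nonneg _)
  _ = (∑ i, ∑ j, ‖A i j‖) * ‖x‖ := by
      rw [Finset.sum_mul]
      exact Finset.sum_congr rfl fun i _ => (Finset.sum_mul _ _ _).symm

/-- A strictly lower triangular `n × n` matrix is nilpotent of order `n`. -/
lemma strict_lower_pow (n : ℕ) (M : Matrix (Fin n) (Fin n) ℂ)
    (h : ∀ i j : Fin n, (i : ℕ) ≤ (j : ℕ) → M i j = 0) :
    M ^ n = 0 := by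
  have key : ∀ k : ℕ, ∀ i j : Fin n, (i : ℕ) < (j : ℕ) + k → (M ^ k) i j = 0 := by
    intro k
    induction k with
    | zero =>
      intro i j hij
      rw [pow_zero]
      exact Matrix.one_apply_ne (Fin.ne_of_val_ne (by omega))
    | succ k ih =>
      intro i j hij
      rw [pow_succ, Matrix.mul_apply]
      refine Finset.sum_eq_zero fun l _ => ?_
      by_cases h1 : (i : ℕ) < (l : ℕ) + k
      · rw [ih i l h1, zero_mul]
      · rw [h l j (by omega), mul_zero]
  ext i j
  simp only [Matrix.zero_apply]
  exact key n i j (by omega)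

lemma clm_pow_norm_le {E : Type*} [NormedAddCommGroup E] [NormedSpace ℂ E]
    (T : E →L[ℂ] E) (M : ℝ) (h : ‖T‖ ≤ M) (k : ℕ) : ‖T ^ k‖ ≤ M ^ k := by
  induction k with
  | zero => rw [pow_zero, pow_zero]; exact ContinuousLinearMap.norm_id_le
  | succ k ih =>
    rw [pow_succ, pow_succ]
    exact le_trans (norm_mul_le _ _)
      (mul_le_mul ih h (norm_nonneg _) (pow_nonneg (le_trans (norm_nonneg _) h) _))

/-- Lower bound on the diagonal entries of `L_ε(a)`. -/
lemma key_diag (μ lm : ℝ) (hμ : 0 < μ) (hlm : 0 < lm) (lam : ℝ) (hl : lm ≤ |lam|)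
    (σ : ℝ) (hσ : 0 < σ) (hσ0 : σ ≤ μ * Real.sqrt (lm / 2) / (2 * lm))
    (ε : ℂ) (hε : ε ∈ ConeDom σ μ) (a : ℝ) :
    min (μ / Real.sqrt (μ ^ 2 + 1) * (lm / 2)) (lm / μ) * σ ≤
      ‖ε * ((lam : ℂ) - (a : ℂ) ^ 2) + Complex.I * a‖ := by
  obtain ⟨h1, h2, h3⟩ := hε
  set x := ε.re with hx
  set y := ε.im with hy
  set t : ℝ := lam - a ^ 2 with ht
  set d : ℂ := ε * ((lam : ℂ) - (a : ℂ) ^ 2) + Complex.I * a with hd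
  have hdt : d = ε * ((t : ℝ) : ℂ) + Complex.I * a := by rw [hd, ht]; push_cast; ring
  have hdre : d.re = x * t := by
    rw [hdt]
    simp [Complex.add_re, Complex.mul_re, Complex.I_re, Complex.I_im, hx]
  have hdim : d.im = y * t + a := by
    rw [hdt]
    simp [Complex.add_im, Complex.mul_im, Complex.I_re, Complex.I_im, hy]
  have hsq : Real.sqrt (μ ^ 2 + 1) > 0 := Real.sqrt_pos.mpr (by positivity)
  have hsqsq : Real.sqrt (μ ^ 2 + 1) ^ 2 = μ ^ 2 + 1 := Real.sq_sqrt (by positivity)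
  have hyx : |y| ≤ x / μ := by
    rw [le_div_iff₀ hμ]; nlinarith [h1]
  have hx0 : 0 ≤ x := le_trans (by positivity) h1
  have habs : ‖ε‖ ^ 2 = x ^ 2 + y ^ 2 := by
    rw [Complex.sq_norm, Complex.normSq_apply]; ring
  have hxlow : μ / Real.sqrt (μ ^ 2 + 1) * σ ≤ x := by
    have hy2 : y ^ 2 ≤ x ^ 2 / μ ^ 2 := by
      have := pow_le_pow_left₀ (abs_nonneg y) hyx 2
      rwa [sq_abs, div_pow] at this
    have h5 : μ * ‖ε‖ ≤ x * Real.sqrt (μ ^ 2 + 1) := by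
      have h6 : (μ * ‖ε‖) ^ 2 ≤ (x * Real.sqrt (μ ^ 2 + 1)) ^ 2 := by
        rw [mul_pow, mul_pow, hsqsq, habs]
        have hμ2 : (0:ℝ) < μ ^ 2 := by positivity
        have h9 := (le_div_iff₀ hμ2).mp hy2
        nlinarith [h9]
      have hnn1 : 0 ≤ μ * ‖ε‖ := by positivity
      have hnn2 : 0 ≤ x * Real.sqrt (μ ^ 2 + 1) := by positivity
      nlinarith [h6]
    rw [div_mul_eq_mul_div, div_le_iff₀ hsq]
    calc μ * σ ≤ μ * ‖ε‖ := mul_le_mul_of_nonneg_left h2 (le_of_lt hμ)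
    _ ≤ x * Real.sqrt (μ ^ 2 + 1) := h5
  set α := Real.sqrt (lm / 2) with hα
  have hα0 : 0 < α := Real.sqrt_pos.mpr (by positivity)
  have hα2 : α ^ 2 = lm / 2 := Real.sq_sqrt (by positivity)
  by_cases hcase : lm / 2 ≤ |t|
  · calc min (μ / Real.sqrt (μ ^ 2 + 1) * (lm / 2)) (lm / μ) * σ
        ≤ μ / Real.sqrt (μ ^ 2 + 1) * (lm / 2) * σ :=
          mul_le_mul_of_nonneg_right (min_le_left _ _) (le_of_lt hσ)
    _ = (μ / Real.sqrt (μ ^ 2 + 1) * σ) * (lm / 2) := by ring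
    _ ≤ x * |t| := mul_le_mul hxlow hcase (by positivity) hx0
    _ = |d.re| := by rw [hdre, abs_mul, abs_of_nonneg hx0]
    _ ≤ ‖d‖ := Complex.abs_re_le_norm d
  · push_neg at hcase
    have hlam0 : 0 < lam := by
      rcases lt_or_ge lam 0 with h | h
      · exfalso
        have habs_t : |t| = a ^ 2 - lam := by
          rw [ht, abs_of_nonpos (by nlinarith [sq_nonneg a])]; ring
        rw [abs_of_neg h] at hl
        have h10 : a ^ 2 - lam < lm / 2 := habs_t ▸ hcase
        linarith [sq_nonneg a]
      · rcases eq_or_lt_of_le h with h' | h'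
        · exfalso; rw [← h', abs_zero] at hl; linarith
        · exact h'
    have hlaml : lm ≤ lam := by rwa [abs_of_pos hlam0] at hl
    have ha2 : lm / 2 ≤ a ^ 2 := by
      have heq : a ^ 2 = lam - t := by rw [ht]; ring
      have := abs_lt.mp hcase
      rw [heq]; linarith
    have haα : α ≤ |a| := by
      rw [hα, ← Real.sqrt_sq_eq_abs]
      exact Real.sqrt_le_sqrt ha2
    have hyσ : |y| ≤ 2 * σ / μ := by
      have hxe : x ≤ ‖ε‖ := Complex.re_le_norm ε
      calc |y| ≤ x / μ := hyx
      _ ≤ 2 * σ / μ := (div_le_div_iff_of_pos_right hμ).mpr (le_trans hxe h3)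
    have hσα : 2 * σ / μ ≤ α / lm := by
      rw [div_le_div_iff₀ hμ hlm]
      calc 2 * σ * lm ≤ 2 * (μ * α / (2 * lm)) * lm :=
            mul_le_mul_of_nonneg_right (by linarith) (le_of_lt hlm)
      _ = α * μ := by field_simp
    have hyt : |y * t| ≤ α / 2 := by
      rw [abs_mul]
      calc |y| * |t| ≤ (α / lm) * (lm / 2) :=
            mul_le_mul (le_trans hyσ hσα) (le_of_lt hcase) (abs_nonneg _) (by positivity)
      _ = α / 2 := by field_simp
    have him : α / 2 ≤ |d.im| := by
      rw [hdim]
      have h7 : |a| - |y * t| ≤ |y * t + a| := by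
        calc |a| - |y * t| ≤ |a + y * t| := by
              have := abs_add_le (a + y * t) (-(y * t))
              simp only [add_neg_cancel_right] at this
              rw [abs_neg] at this
              linarith
        _ = |y * t + a| := by rw [add_comm]
      linarith [haα, hyt]
    calc min (μ / Real.sqrt (μ ^ 2 + 1) * (lm / 2)) (lm / μ) * σ
        ≤ lm / μ * σ := mul_le_mul_of_nonneg_right (min_le_right _ _) (le_of_lt hσ)
    _ ≤ α / 2 := by
        rw [div_mul_eq_mul_div, div_le_div_iff₀ hμ (by norm_num : (0:ℝ) < 2)]
        calc lm * σ * 2 ≤ lm * (μ * α / (2 * lm)) * 2 := by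
              apply mul_le_mul_of_nonneg_right _ (by norm_num)
              exact mul_le_mul_of_nonneg_left hσ0 (le_of_lt hlm)
        _ = α * μ := by field_simp
    _ ≤ |d.im| := him
    _ ≤ ‖d‖ := Complex.abs_im_le_norm d

set_option maxHeartbeats 1000000 in
set_option synthInstance.maxHeartbeats 400000 in
/-- if `J` is in Jordan normal form with real nonzero diagonal entries, then
for every `μ > 0` there are `C, σ₀ > 0` such that for all `0 < σ ≤ σ₀`, `ε ∈ Ω(σ,μ)`,
`a ∈ ℝ` the matrix `L_ε(a)` is invertible with `‖L_ε(a)⁻¹‖ ≤ C σ⁻¹` and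
`‖ε L_ε(a)⁻¹‖ ≤ 2C` (operator norms on Euclidean `ℂⁿ`). -/
theorem stmt13 (n : ℕ) (hn : 1 ≤ n) (J : Matrix (Fin n) (Fin n) ℂ) (hJ : IsJordanForm J)
    (hdiag : ∀ i, (J i i).im = 0 ∧ J i i ≠ 0) (μ : ℝ) (hμ : 0 < μ) :
    ∃ C > (0 : ℝ), ∃ σ₀ > (0 : ℝ), ∀ σ : ℝ, 0 < σ → σ ≤ σ₀ → ∀ ε ∈ ConeDom σ μ, ∀ a : ℝ,
      IsUnit (Lmat J ε a).det ∧
      ‖Matrix.toEuclideanCLM (𝕜 := ℂ) (Lmat J ε a)⁻¹‖ ≤ C / σ ∧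
      ‖Matrix.toEuclideanCLM (𝕜 := ℂ) (ε • (Lmat J ε a)⁻¹)‖ ≤ 2 * C := by
  have hne : (Finset.univ : Finset (Fin n)).Nonempty := ⟨⟨0, by omega⟩, Finset.mem_univ _⟩
  have hnpos : (0:ℝ) < n := by exact_mod_cast hn
  set lam : Fin n → ℝ := fun i => (J i i).re with hlam
  have hJii : ∀ i, J i i = ((lam i : ℝ) : ℂ) := fun i =>
    Complex.ext (by simp [hlam]) (by simp [hlam, (hdiag i).1])
  have hlam0 : ∀ i, lam i ≠ 0 := fun i h => (hdiag i).2 (by rw [hJii i, h]; simp)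
  set lm : ℝ := Finset.univ.inf' hne (fun i => |lam i|) with hlm
  have hlmle : ∀ i, lm ≤ |lam i| := fun i => Finset.inf'_le _ (Finset.mem_univ i)
  have hlmpos : 0 < lm := by
    rw [hlm, Finset.lt_inf'_iff]
    exact fun i _ => abs_pos.mpr (hlam0 i)
  set α := Real.sqrt (lm / 2) with hα
  have hαpos : 0 < α := Real.sqrt_pos.mpr (by positivity)
  set σ₀ := μ * α / (2 * lm) with hσ₀def
  have hσ₀pos : 0 < σ₀ := by positivity
  set c₁ := min (μ / Real.sqrt (μ ^ 2 + 1) * (lm / 2)) (lm / μ) with hc₁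
  have hc₁pos : 0 < c₁ := by
    apply lt_min
    · have : 0 < Real.sqrt (μ ^ 2 + 1) := Real.sqrt_pos.mpr (by positivity)
      positivity
    · positivity
  set M : ℝ := 2 * (n:ℝ) ^ 2 / c₁ with hM
  have hMpos : 0 < M := by positivity
  set S : ℝ := ∑ k ∈ Finset.range n, M ^ k with hS
  have hSpos : 0 < S :=
    Finset.sum_pos (fun k _ => pow_pos hMpos k) ⟨0, Finset.mem_range.mpr (by omega)⟩
  set C : ℝ := S * n / c₁ with hC
  have hCpos : 0 < C := div_pos (mul_pos hSpos hnpos) hc₁pos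
  refine ⟨C, hCpos, σ₀, hσ₀pos, ?_⟩
  intro σ hσ hσσ₀ ε hε a
  have hε3 : ‖ε‖ ≤ 2 * σ := hε.2.2
  set d : Fin n → ℂ := fun i => -ε * (a:ℂ) ^ 2 + Complex.I * a + ε * (lam i) with hdd
  have hdlow : ∀ i, c₁ * σ ≤ ‖d i‖ := by
    intro i
    have h := key_diag μ lm hμ hlmpos (lam i) (hlmle i) σ hσ (le_trans hσσ₀ (le_of_eq rfl)) ε hε a
    have heq : d i = ε * ((lam i : ℂ) - (a:ℂ) ^ 2) + Complex.I * a := by rw [hdd]; ring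
    rw [heq]
    exact h
  have hcσpos : 0 < c₁ * σ := mul_pos hc₁pos hσ
  have hd0 : ∀ i, d i ≠ 0 := by
    intro i h
    have := hdlow i
    rw [h, norm_zero] at this
    linarith
  -- structure of Lmat
  have hLdiag : ∀ i, Lmat J ε a i i = d i := by
    intro i
    simp [Lmat, Matrix.add_apply, Matrix.smul_apply, Matrix.one_apply_eq, hJii i, hdd]
  have hLentry : ∀ i j, i ≠ j → Lmat J ε a i j = ε * J i j := by
    intro i j hij
    simp [Lmat, Matrix.add_apply, Matrix.smul_apply, Matrix.one_apply_ne hij]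
  set N : Matrix (Fin n) (Fin n) ℂ := Lmat J ε a - Matrix.diagonal d with hN
  have hNdiag : ∀ i, N i i = 0 := by
    intro i
    rw [hN, Matrix.sub_apply, Matrix.diagonal_apply_eq, hLdiag i, sub_self]
  have hNzero : ∀ i j : Fin n, (i:ℕ) ≤ (j:ℕ) → N i j = 0 := by
    intro i j hij
    by_cases h : i = j
    · subst h; exact hNdiag i
    · have hJ0 : J i j = 0 := by
        by_contra hne
        rcases hJ.1 i j hne with h1 | h1
        · exact h h1
        · have := Fin.val_ne_of_ne h
          omega
      rw [hN, Matrix.sub_apply, Matrix.diagonal_apply_ne _ h, hLentry i j h, hJ0, mul_zero,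
        sub_zero]
  have hNbound : ∀ i j, ‖N i j‖ ≤ ‖ε‖ := by
    intro i j
    by_cases h : i = j
    · subst h; rw [hNdiag i, norm_zero]; exact norm_nonneg ε
    · rw [hN, Matrix.sub_apply, Matrix.diagonal_apply_ne _ h, sub_zero, hLentry i j h, norm_mul]
      have hJb : ‖J i j‖ ≤ 1 := by
        by_cases hne : J i j = 0
        · simp [hne]
        · rcases hJ.1 i j hne with h1 | h1
          · exact absurd h1 h
          · rcases hJ.2 i j h1 with h2 | h2
            · exact absurd h2 hne
            · rw [h2.1]; simp
      calc ‖ε‖ * ‖J i j‖ ≤ ‖ε‖ * 1 :=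
            mul_le_mul_of_nonneg_left hJb (norm_nonneg ε)
      _ = ‖ε‖ := mul_one _
  set Dinv := Matrix.diagonal (fun i => (d i)⁻¹) with hDinv
  set K := Dinv * N with hK
  have hKentry : ∀ i j, K i j = (d i)⁻¹ * N i j := by
    intro i j
    rw [hK, hDinv, Matrix.diagonal_mul]
  have hKzero : ∀ i j : Fin n, (i:ℕ) ≤ (j:ℕ) → K i j = 0 := by
    intro i j hij
    rw [hKentry, hNzero i j hij, mul_zero]
  have hKpow : (-K) ^ n = 0 :=
    strict_lower_pow n (-K) (fun i j h => by rw [Matrix.neg_apply, hKzero i j h, neg_zero])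
  have hDD : Matrix.diagonal d * Dinv = 1 := by
    rw [hDinv, Matrix.diagonal_mul_diagonal]
    rw [show (fun i => d i * (d i)⁻¹) = fun _ => (1:ℂ) from
      funext fun i => mul_inv_cancel₀ (hd0 i)]
    exact Matrix.diagonal_one
  set B := (∑ k ∈ Finset.range n, (-K) ^ k) * Dinv with hB
  have hgeo : (1 + K) * (∑ k ∈ Finset.range n, (-K) ^ k) = 1 := by
    have h := mul_neg_geom_sum (-K) n
    rw [sub_neg_eq_add] at h
    rw [h, hKpow, sub_zero]
  have hLfact : Lmat J ε a = Matrix.diagonal d * (1 + K) := by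
    rw [mul_add, mul_one, hK, ← mul_assoc, hDD, one_mul, hN]
    abel
  have hright : Lmat J ε a * B = 1 := by
    rw [hB, hLfact, mul_assoc, ← mul_assoc (1 + K), hgeo, one_mul, hDD]
  have hinv : (Lmat J ε a)⁻¹ = B := Matrix.inv_eq_right_inv hright
  have hunit : IsUnit (Lmat J ε a).det := by
    apply IsUnit.of_mul_eq_one B.det
    rw [← Matrix.det_mul, hright, Matrix.det_one]
  -- norm estimates
  have hDinvNorm : ‖Matrix.toEuclideanCLM (𝕜 := ℂ) Dinv‖ ≤ n * (c₁ * σ)⁻¹ := by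
    calc ‖Matrix.toEuclideanCLM (𝕜 := ℂ) Dinv‖ ≤ ∑ i, ∑ j, ‖Dinv i j‖ := clm_norm_le_sum n _
    _ = ∑ i : Fin n, ‖(d i)⁻¹‖ := by
        refine Finset.sum_congr rfl fun i _ => ?_
        rw [Finset.sum_eq_single i]
        · rw [hDinv, Matrix.diagonal_apply_eq]
        · intro j _ hj
          rw [hDinv, Matrix.diagonal_apply_ne' _ hj, norm_zero]
        · intro h; exact absurd (Finset.mem_univ i) h
    _ ≤ ∑ i : Fin n, (c₁ * σ)⁻¹ := by
        refine Finset.sum_le_sum fun i _ => ?_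
        rw [norm_inv]
        exact inv_anti₀ hcσpos (hdlow i)
    _ = n * (c₁ * σ)⁻¹ := by
        rw [Finset.sum_const, Finset.card_univ, Fintype.card_fin, nsmul_eq_mul]
  have hKnorm : ‖Matrix.toEuclideanCLM (𝕜 := ℂ) K‖ ≤ M := by
    calc ‖Matrix.toEuclideanCLM (𝕜 := ℂ) K‖ ≤ ∑ i, ∑ j, ‖K i j‖ := clm_norm_le_sum n _
    _ ≤ ∑ i : Fin n, ∑ j : Fin n, (c₁ * σ)⁻¹ * (2 * σ) := by
        refine Finset.sum_le_sum fun i _ => Finset.sum_le_sum fun j _ => ?_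
        rw [hKentry, norm_mul, norm_inv]
        apply mul_le_mul (inv_anti₀ hcσpos (hdlow i))
          (le_trans (hNbound i j) hε3) (norm_nonneg _) (le_of_lt (inv_pos.mpr hcσpos))
    _ = (n:ℝ) ^ 2 * ((c₁ * σ)⁻¹ * (2 * σ)) := by
        rw [Finset.sum_const, Finset.sum_const, Finset.card_univ, Fintype.card_fin,
          nsmul_eq_mul, nsmul_eq_mul]
        ring
    _ = M := by
        rw [hM]
        field_simp
  have hKneg : ‖Matrix.toEuclideanCLM (𝕜 := ℂ) (-K)‖ ≤ M := by
    rw [map_neg, norm_neg]; exact hKnorm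
  have hBnorm : ‖Matrix.toEuclideanCLM (𝕜 := ℂ) B‖ ≤ C / σ := by
    rw [hB, map_mul]
    calc ‖Matrix.toEuclideanCLM (𝕜 := ℂ) (∑ k ∈ Finset.range n, (-K) ^ k) *
            Matrix.toEuclideanCLM (𝕜 := ℂ) Dinv‖
        ≤ ‖Matrix.toEuclideanCLM (𝕜 := ℂ) (∑ k ∈ Finset.range n, (-K) ^ k)‖ *
            ‖Matrix.toEuclideanCLM (𝕜 := ℂ) Dinv‖ := norm_mul_le _ _
    _ ≤ S * (n * (c₁ * σ)⁻¹) := by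
        apply mul_le_mul _ hDinvNorm (norm_nonneg _) (le_of_lt hSpos)
        rw [map_sum]
        calc ‖∑ k ∈ Finset.range n, Matrix.toEuclideanCLM (𝕜 := ℂ) ((-K) ^ k)‖
            ≤ ∑ k ∈ Finset.range n, ‖Matrix.toEuclideanCLM (𝕜 := ℂ) ((-K) ^ k)‖ :=
              norm_sum_le _ _
        _ ≤ ∑ k ∈ Finset.range n, M ^ k := by
            refine Finset.sum_le_sum fun k _ => ?_
            rw [map_pow]
            exact clm_pow_norm_le _ M hKneg k
        _ = S := hS.symm
    _ = C / σ := by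
        rw [hC]
        field_simp
  refine ⟨hunit, ?_, ?_⟩
  · rw [hinv]; exact hBnorm
  · rw [hinv, map_smul]
    refine le_trans (ContinuousLinearMap.opNorm_smul_le ε _) ?_
    calc ‖ε‖ * ‖Matrix.toEuclideanCLM (𝕜 := ℂ) B‖ ≤ (2 * σ) * (C / σ) := by
          apply mul_le_mul _ hBnorm (norm_nonneg _) (by positivity)
          exact hε3
    _ = 2 * C := by field_simp

end
end

section
/- Let β > 0 and μ > 0. Then there exist constants C > 0 and σ₀ > 0 (depending on β and μ) such that for every 0 < σ ≤ σ₀, every ε ∈ Ω(σ,μ), every a ∈ ℝ and every integer t ≥ 1 with βt ≠ 1, one has |(−εa² + ia − ε(βt² − t))/t| ≥ σ/C. -/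
lemma delta_exists (β : ℝ) (hβ : 0 < β) :
    ∃ δ : ℝ, 0 < δ ∧ δ ≤ 1 ∧ ∀ t : ℤ, 1 ≤ t → β * (t : ℝ) ≠ 1 → δ ≤ |β * (t : ℝ) - 1| := by
  set N : ℤ := ⌈2 / β⌉ with hN
  set S : Finset ℤ := (Finset.Icc (1:ℤ) N).filter (fun t => β * (t : ℝ) ≠ 1) with hS
  set F : Finset ℝ := insert (1:ℝ) (S.image (fun t : ℤ => |β * (t : ℝ) - 1|)) with hF
  have hFne : F.Nonempty := ⟨1, Finset.mem_insert_self _ _⟩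
  refine ⟨F.min' hFne, ?_, ?_, ?_⟩
  · have hmem := F.min'_mem hFne
    rcases Finset.mem_insert.mp hmem with h | h
    · rw [h]; norm_num
    · rcases Finset.mem_image.mp h with ⟨t, ht, heq⟩
      have hne : β * (t : ℝ) ≠ 1 := (Finset.mem_filter.mp ht).2
      rw [← heq]
      exact abs_pos.mpr (sub_ne_zero.mpr hne)
  · exact F.min'_le 1 (Finset.mem_insert_self _ _)
  · intro t ht hne
    by_cases hle : t ≤ N
    · exact F.min'_le _ (Finset.mem_insert_of_mem (Finset.mem_image_of_mem _
        (Finset.mem_filter.mpr ⟨Finset.mem_Icc.mpr ⟨ht, hle⟩, hne⟩)))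
    · push_neg at hle
      have h2 : (2:ℝ)/β < (t : ℝ) := lt_of_le_of_lt (Int.le_ceil _) (by exact_mod_cast hle)
      have h3 : (2:ℝ) < β * t := by rw [div_lt_iff₀ hβ] at h2; linarith
      have h1 : (1:ℝ) < |β*(t:ℝ) - 1| := by rw [abs_of_pos (by linarith)]; linarith
      have := F.min'_le 1 (Finset.mem_insert_self _ _)
      linarith

lemma num_re (ε : ℂ) (a r : ℝ) :
    (-ε * (a:ℂ)^2 + Complex.I * (a:ℂ) - ε * (r:ℂ)).re = -(ε.re * (a^2 + r)) := by
  simp [Complex.mul_re, Complex.mul_im, pow_two]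
  ring

lemma num_im (ε : ℂ) (a r : ℝ) :
    (-ε * (a:ℂ)^2 + Complex.I * (a:ℂ) - ε * (r:ℂ)).im = a - ε.im * (a^2 + r) := by
  simp [Complex.mul_re, Complex.mul_im, pow_two]
  ring

set_option maxHeartbeats 1000000 in
/-- for `β > 0` and `μ > 0` there are `C > 0`, `σ₀ > 0` such that for all
`0 < σ ≤ σ₀`, `ε ∈ Ω(σ,μ)`, `a ∈ ℝ` and integers `t ≥ 1` with `βt ≠ 1`:
`|(-εa² + ia - ε(βt² - t))/t| ≥ σ/C`. -/
theorem stmt17 (β μ : ℝ) (hβ : 0 < β) (hμ : 0 < μ) :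
    ∃ C > (0 : ℝ), ∃ σ₀ > (0 : ℝ), ∀ σ : ℝ, 0 < σ → σ ≤ σ₀ → ∀ ε ∈ ConeDom σ μ,
      ∀ a : ℝ, ∀ t : ℤ, 1 ≤ t → β * (t : ℝ) ≠ 1 →
        σ / C ≤ ‖(-ε * (a : ℂ) ^ 2 + Complex.I * (a : ℂ)
          - ε * ((β : ℂ) * (t : ℂ) ^ 2 - (t : ℂ))) / (t : ℂ)‖ := by
  obtain ⟨δ, hδ0, hδ1, hδ⟩ := delta_exists β hβ
  have hr0 : (0:ℝ) < Real.sqrt (μ^2 + 1) := Real.sqrt_pos.mpr (by positivity)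
  set m : ℝ := μ / Real.sqrt (μ^2 + 1) with hm
  have hm0 : 0 < m := by positivity
  set K : ℝ := Real.sqrt (δ * β / 2) / 2 with hK
  have hK0 : 0 < K := by positivity
  set σ₀ : ℝ := min 1 (μ * K / δ) with hσ₀
  have hσ₀0 : 0 < σ₀ := lt_min one_pos (by positivity)
  set c : ℝ := min (m * δ / 2) (K / σ₀) with hc
  have hc0 : 0 < c := lt_min (by positivity) (by positivity)
  refine ⟨1/c, by positivity, σ₀, hσ₀0, ?_⟩
  intro σ hσ0 hσσ₀ ε hε a t ht hβt
  obtain ⟨hεre, hεabs1, hεabs2⟩ := hε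
  have ht0 : (0:ℝ) < (t:ℝ) := by exact_mod_cast ht
  have hx0 : 0 ≤ ε.re := le_trans (by positivity) hεre
  -- |y| ≤ 2σ/μ
  have hy : |ε.im| ≤ 2 * σ / μ := by
    rw [le_div_iff₀ hμ]
    have := Complex.re_le_norm ε
    nlinarith
  -- m σ ≤ x
  have hx : m * σ ≤ ε.re := by
    have hsq : σ^2 ≤ ε.re^2 + ε.im^2 := by
      have h1 : σ^2 ≤ ‖ε‖^2 :=
        pow_le_pow_left₀ (le_of_lt hσ0) hεabs1 2
      have h2 : ‖ε‖^2 = ε.re^2 + ε.im^2 := by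
        rw [Complex.sq_norm, Complex.normSq_apply]; ring
      linarith
    have hr : (Real.sqrt (μ^2+1))^2 = μ^2 + 1 := Real.sq_sqrt (by positivity)
    have hysq : μ^2 * ε.im^2 ≤ ε.re^2 := by
      have h := mul_self_le_mul_self (by positivity : (0:ℝ) ≤ μ * |ε.im|) hεre
      nlinarith [sq_abs ε.im]
    have hsq2 : (μ*σ)^2 ≤ (ε.re * Real.sqrt (μ^2+1))^2 := by nlinarith [sq_nonneg μ]
    have h3 : μ * σ ≤ ε.re * Real.sqrt (μ^2+1) := by
      calc μ * σ = Real.sqrt ((μ*σ)^2) := (Real.sqrt_sq (by positivity)).symm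
        _ ≤ Real.sqrt ((ε.re * Real.sqrt (μ^2+1))^2) := Real.sqrt_le_sqrt hsq2
        _ = ε.re * Real.sqrt (μ^2+1) := Real.sqrt_sq (by positivity)
    rw [hm, div_mul_eq_mul_div, div_le_iff₀ hr0]
    linarith
  -- rewrite numerator
  have hcast : (β:ℂ)*(t:ℂ)^2 - (t:ℂ) = ((β*(t:ℝ)^2 - (t:ℝ) : ℝ) : ℂ) := by push_cast; ring
  have hden : ((t:ℤ):ℂ) = (((t:ℝ)):ℂ) := by push_cast; ring
  rw [hcast, hden, norm_div, Complex.norm_real, Real.norm_eq_abs, abs_of_pos ht0, show σ / (1/c) = σ * c from by field_simp,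
    le_div_iff₀ ht0]
  set r : ℝ := β*(t:ℝ)^2 - (t:ℝ) with hr'
  set s : ℝ := a^2 + r with hs
  have hre := num_re ε a r
  have him := num_im ε a r
  by_cases hcase : δ * t / 2 ≤ |s|
  · have h1 : m * σ * (δ * t / 2) ≤ ε.re * |s| :=
      mul_le_mul hx hcase (by positivity) hx0
    have h2 : ε.re * |s| = |(-ε * (a:ℂ)^2 + Complex.I * (a:ℂ) - ε * (r:ℂ)).re| := by
      rw [hre, ← hs, abs_neg, abs_mul, abs_of_nonneg hx0]
    have hcle : c ≤ m * δ / 2 := min_le_left _ _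
    calc σ * c * t ≤ σ * (m * δ / 2) * t :=
        mul_le_mul_of_nonneg_right (mul_le_mul_of_nonneg_left hcle hσ0.le) ht0.le
      _ = m * σ * (δ * t / 2) := by ring
      _ ≤ ε.re * |s| := h1
      _ = |(-ε * (a:ℂ)^2 + Complex.I * (a:ℂ) - ε * (r:ℂ)).re| := h2
      _ ≤ ‖_‖ := Complex.abs_re_le_norm _
  · push_neg at hcase
    have hδt : δ ≤ |β * (t:ℝ) - 1| := hδ t ht hβt
    have hsr : s = a^2 + β*(t:ℝ)^2 - (t:ℝ) := by rw [hs, hr']; ring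
    have hβt1 : β * (t:ℝ) < 1 := by
      by_contra h
      push_neg at h
      have h1 : δ ≤ β * (t:ℝ) - 1 := by rwa [abs_of_nonneg (by linarith)] at hδt
      nlinarith [sq_nonneg a, le_abs_self s]
    have h1mb : δ ≤ 1 - β * (t:ℝ) := by
      rw [abs_of_neg (by linarith)] at hδt; linarith
    have ha2 : δ * β / 2 * (t:ℝ)^2 ≤ a^2 := by
      have hbt : β * (t:ℝ)^2 ≤ (t:ℝ) := by nlinarith
      nlinarith [neg_abs_le s]
    have haK : 2 * K * t ≤ |a| := by
      have hKsq : (2*K)^2 = δ * β / 2 := by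
        rw [hK, mul_div_cancel₀ _ (two_ne_zero)]
        exact Real.sq_sqrt (by positivity)
      have h2 : (2*K*t)^2 ≤ a^2 := by nlinarith
      calc 2*K*t = Real.sqrt ((2*K*t)^2) := (Real.sqrt_sq (by positivity)).symm
        _ ≤ Real.sqrt (a^2) := Real.sqrt_le_sqrt h2
        _ = |a| := Real.sqrt_sq_eq_abs a
    have hσ₀' : σ₀ ≤ μ * K / δ := min_le_right _ _
    have hys : |ε.im * s| ≤ K * t := by
      rw [abs_mul]
      have h1 : |ε.im| * |s| ≤ (2*σ/μ) * (δ*t/2) :=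
        mul_le_mul hy (le_of_lt hcase) (abs_nonneg s) (by positivity)
      have h2 : σ * δ ≤ μ * K := by
        have h3 := le_trans hσσ₀ hσ₀'
        rw [le_div_iff₀ hδ0] at h3
        nlinarith
      have h4 : (2*σ/μ) * (δ*t/2) ≤ K * t := by
        rw [div_mul_eq_mul_div, div_le_iff₀ hμ]
        nlinarith [mul_le_mul_of_nonneg_right h2 ht0.le]
      linarith
    have him2 : K * t ≤ |a - ε.im * s| := by
      have h5 := abs_sub_abs_le_abs_sub a (ε.im * s)
      linarith
    have hcle : c ≤ K / σ₀ := min_le_right _ _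
    calc σ * c * t ≤ σ₀ * (K / σ₀) * t :=
        mul_le_mul_of_nonneg_right
          (mul_le_mul hσσ₀ hcle (le_of_lt hc0) (le_of_lt hσ₀0)) (le_of_lt ht0)
      _ = K * t := by field_simp
      _ ≤ |a - ε.im * s| := him2
      _ = |(-ε * (a:ℂ)^2 + Complex.I * (a:ℂ) - ε * (r:ℂ)).im| := by rw [him, ← hs]
      _ ≤ ‖_‖ := Complex.abs_im_le_norm _
end
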